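/- arXiv:2002.12358 — 6 statements merged into one kernel-verified Lean document; each statement's English description precedes it below -/
import Mathlib

section
/- Let g be a Lie algebra, u a g-module, and T : u → g a linear map satisfying the classical Yang–Baxter equation T(T(u)·v − T(v)·u) = [T(u),T(v)] for all u,v ∈ u. Then the product u∘v := T(u)·v on u is left-symmetric. -/
theorem cybe_product_leftSymmetric_general
    {k g u : Type*} [Field k] [LieRing g] [LieAlgebra k g]
    [AddCommGroup u] [Module k u] [LieRingModule g u]
    (T : u →ₗ[k] g)
    (hT : ∀ a b : u, T (⁅T a, b⁆ - ⁅T b, a⁆) = ⁅T a, T b⁆)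
    (a b c : u) :
    ⁅T ⁅T a, b⁆, c⁆ - ⁅T a, ⁅T b, c⁆⁆
      = ⁅T ⁅T b, a⁆, c⁆ - ⁅T b, ⁅T a, c⁆⁆ := by
  -- The associator difference is `T(a ∘ b - b ∘ a) · c - [T a, T b] · c`, which CYBE kills.
  have commutator_action :
      ⁅T ⁅T a, b⁆, c⁆ - ⁅T ⁅T b, a⁆, c⁆ = ⁅T a, ⁅T b, c⁆⁆ - ⁅T b, ⁅T a, c⁆⁆ := by
    rw [← sub_lie, ← map_sub, hT, lie_lie]
  rwa [sub_eq_sub_iff_sub_eq_sub]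

/-- If `T : u → g` satisfies the classical Yang–Baxter equation, then the
product `u ∘ v := T(u)·v` on the `g`-module `u` is left-symmetric. -/
theorem cybe_product_leftSymmetric
    {k g u : Type*} [Field k] [CharZero k] [LieRing g] [LieAlgebra k g]
    [AddCommGroup u] [Module k u] [LieRingModule g u] [LieModule k g u]
    (T : u →ₗ[k] g)
    (hT : ∀ a b : u, T (⁅T a, b⁆ - ⁅T b, a⁆) = ⁅T a, T b⁆)
    (a b c : u) :
    ⁅T ⁅T a, b⁆, c⁆ - ⁅T a, ⁅T b, c⁆⁆
      = ⁅T ⁅T b, a⁆, c⁆ - ⁅T b, ⁅T a, c⁆⁆ :=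
  cybe_product_leftSymmetric_general T hT a b c
end

section
/- Let φ : u' → u be a g-module homomorphism and T : u → g satisfy the classical Yang–Baxter equation. Then T' := T∘φ : u' → g also satisfies the classical Yang–Baxter equation, and φ induces a Lie algebra homomorphism from u'_{T'} to u_T with the induced brackets [u,v]_{T'} = T'(u)·v − T'(v)·u and [u,v]_T = T(u)·v − T(v)·u. -/
theorem LinearMap.map_sub_lie_of_commute_lie {R L M N : Type*} [Semiring R] [LieRing L]
    [AddCommGroup M] [Module R M] [LieRingModule L M]
    [AddCommGroup N] [Module R N] [LieRingModule L N]
    (φ : M →ₗ[R] N) (hφ : ∀ (x : L) (a : M), φ ⁅x, a⁆ = ⁅x, φ a⁆) (x y : L) (a b : M) :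
    φ (⁅x, a⁆ - ⁅y, b⁆) = ⁅x, φ a⁆ - ⁅y, φ b⁆ := by
  rw [map_sub, hφ, hφ]

theorem cybe_pullback_module_hom_general
    {k g u u' : Type*} [Field k] [LieRing g] [LieAlgebra k g]
    [AddCommGroup u] [Module k u] [LieRingModule g u]
    [AddCommGroup u'] [Module k u'] [LieRingModule g u']
    (φ : u' →ₗ[k] u) (hφ : ∀ (x : g) (a : u'), φ ⁅x, a⁆ = ⁅x, φ a⁆)
    (T : u →ₗ[k] g)
    (hT : ∀ a b : u, T (⁅T a, b⁆ - ⁅T b, a⁆) = ⁅T a, T b⁆) :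
    (∀ a b : u',
      (T ∘ₗ φ) (⁅(T ∘ₗ φ) a, b⁆ - ⁅(T ∘ₗ φ) b, a⁆) = ⁅(T ∘ₗ φ) a, (T ∘ₗ φ) b⁆)
    ∧ (∀ a b : u',
      φ (⁅(T ∘ₗ φ) a, b⁆ - ⁅(T ∘ₗ φ) b, a⁆) = ⁅T (φ a), φ b⁆ - ⁅T (φ b), φ a⁆) := by
  have map_bracket : ∀ a b : u',
      φ (⁅(T ∘ₗ φ) a, b⁆ - ⁅(T ∘ₗ φ) b, a⁆) = ⁅T (φ a), φ b⁆ - ⁅T (φ b), φ a⁆ :=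
    fun a b => φ.map_sub_lie_of_commute_lie hφ _ _ b a
  refine ⟨fun a b => ?_, map_bracket⟩
  rw [LinearMap.comp_apply T φ, map_bracket, hT]
  rfl

/-- If `φ : u' → u` is a `g`-module homomorphism and `T : u → g` satisfies the
CYBE, then `T' := T ∘ φ` also satisfies the CYBE, and `φ` is a Lie algebra
homomorphism from `u'_{T'}` to `u_T`. -/
theorem cybe_pullback_module_hom
    {k g u u' : Type*} [Field k] [CharZero k] [LieRing g] [LieAlgebra k g]
    [AddCommGroup u] [Module k u] [LieRingModule g u] [LieModule k g u]
    [AddCommGroup u'] [Module k u'] [LieRingModule g u'] [LieModule k g u']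
    (φ : u' →ₗ[k] u) (hφ : ∀ (x : g) (a : u'), φ ⁅x, a⁆ = ⁅x, φ a⁆)
    (T : u →ₗ[k] g)
    (hT : ∀ a b : u, T (⁅T a, b⁆ - ⁅T b, a⁆) = ⁅T a, T b⁆) :
    (∀ a b : u',
      (T ∘ₗ φ) (⁅(T ∘ₗ φ) a, b⁆ - ⁅(T ∘ₗ φ) b, a⁆) = ⁅(T ∘ₗ φ) a, (T ∘ₗ φ) b⁆)
    ∧ (∀ a b : u',
      φ (⁅(T ∘ₗ φ) a, b⁆ - ⁅(T ∘ₗ φ) b, a⁆) = ⁅T (φ a), φ b⁆ - ⁅T (φ b), φ a⁆) :=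
  cybe_pullback_module_hom_general φ hφ T hT
end

section
/- Let g be a Lie algebra that is a direct vector space sum g = a ⊕ b with [a,a] ⊆ a, [g,b] ⊆ b, [g,[a,a]] = 0 and [g,[b,b]] = 0. Then the bilinear product defined by a₁·a₂ = (1/2)[a₁,a₂], a₁·b₁ = [a₁,b₁], b₁·a₁ = 0, b₁·b₂ = (1/2)[b₁,b₂] (for a₁,a₂ ∈ a, b₁,b₂ ∈ b) is a Novikov structure on g. -/
/-!
Write `x = xₐ + x_b` along `g = a + b`. Since `[a,a]` and `[b,b]` are central and `[g,b] ⊆ b`,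
almost all terms of the iterated products vanish:
`x·(y·z) = [xₐ,[yₐ,z_b]] + ½[x_b,[yₐ,z_b]]` and `(x·y)·z = ½[[xₐ,y_b],z_b]`.
The Jacobi identity with a central `[xₐ,yₐ]` or `[y_b,z_b]` lets one swap `xₐ ↔ yₐ` in the first
term and `y_b ↔ z_b` in the second, which gives both Novikov identities.
-/

section

variable {k g : Type*} [Field k] [LieRing g] [LieAlgebra k g] {a b : Submodule k g}

structure IsNovikovSplitting (a b : Submodule k g) : Prop where
  lie_mem_left : ∀ x ∈ a, ∀ y ∈ a, ⁅x, y⁆ ∈ a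
  lie_mem_right : ∀ (x : g), ∀ y ∈ b, ⁅x, y⁆ ∈ b
  lie_lie_left : ∀ (x : g), ∀ y ∈ a, ∀ z ∈ a, ⁅x, ⁅y, z⁆⁆ = 0
  lie_lie_right : ∀ (x : g), ∀ y ∈ b, ∀ z ∈ b, ⁅x, ⁅y, z⁆⁆ = 0

namespace IsNovikovSplitting

theorem lie_lie_left' (h : IsNovikovSplitting a b) (x : g) {y z : g} (hy : y ∈ a)
    (hz : z ∈ a) : ⁅⁅y, z⁆, x⁆ = 0 := by
  rw [← lie_skew, h.lie_lie_left x y hy z hz, neg_zero]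

theorem lie_lie_right' (h : IsNovikovSplitting a b) (x : g) {y z : g} (hy : y ∈ b)
    (hz : z ∈ b) : ⁅⁅y, z⁆, x⁆ = 0 := by
  rw [← lie_skew, h.lie_lie_right x y hy z hz, neg_zero]

theorem lie_lie_comm_of_mem_left (h : IsNovikovSplitting a b) (x : g) {y z : g} (hy : y ∈ a)
    (hz : z ∈ a) : ⁅y, ⁅z, x⁆⁆ = ⁅z, ⁅y, x⁆⁆ := by
  rw [leibniz_lie, h.lie_lie_left' x hy hz, zero_add]

theorem lie_lie_right_comm_of_mem_right (h : IsNovikovSplitting a b) (x : g) {y z : g}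
    (hy : y ∈ b) (hz : z ∈ b) : ⁅⁅x, y⁆, z⁆ = ⁅⁅x, z⁆, y⁆ := by
  have hxyz := h.lie_lie_right x y hy z hz
  rw [leibniz_lie, ← lie_skew y ⁅x, z⁆, ← sub_eq_add_neg] at hxyz
  exact sub_eq_zero.mp hxyz

end IsNovikovSplitting

structure IsSplitHalfBracket (a b : Submodule k g) (P : g →ₗ[k] g →ₗ[k] g) : Prop where
  apply_left_left : ∀ x ∈ a, ∀ y ∈ a, P x y = (2 : k)⁻¹ • ⁅x, y⁆
  apply_left_right : ∀ x ∈ a, ∀ y ∈ b, P x y = ⁅x, y⁆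
  apply_right_left : ∀ x ∈ b, ∀ y ∈ a, P x y = 0
  apply_right_right : ∀ x ∈ b, ∀ y ∈ b, P x y = (2 : k)⁻¹ • ⁅x, y⁆

namespace IsSplitHalfBracket

variable {P : g →ₗ[k] g →ₗ[k] g} {xa xb ya yb za zb : g}

theorem apply_add_add (hP : IsSplitHalfBracket a b P) (hxa : xa ∈ a) (hxb : xb ∈ b)
    (hya : ya ∈ a) (hyb : yb ∈ b) :
    P (xa + xb) (ya + yb) = (2 : k)⁻¹ • ⁅xa, ya⁆ + (⁅xa, yb⁆ + (2 : k)⁻¹ • ⁅xb, yb⁆) := by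
  simp only [map_add, LinearMap.add_apply]
  rw [hP.apply_left_left xa hxa ya hya, hP.apply_left_right xa hxa yb hyb,
    hP.apply_right_left xb hxb ya hya, hP.apply_right_right xb hxb yb hyb]
  abel

theorem apply_apply (hP : IsSplitHalfBracket a b P) (h : IsNovikovSplitting a b)
    (hxa : xa ∈ a) (hxb : xb ∈ b) (hya : ya ∈ a) (hyb : yb ∈ b) (hza : za ∈ a) (hzb : zb ∈ b) :
    P (xa + xb) (P (ya + yb) (za + zb)) = ⁅xa, ⁅ya, zb⁆⁆ + (2 : k)⁻¹ • ⁅xb, ⁅ya, zb⁆⁆ := by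
  have hyza : (2 : k)⁻¹ • ⁅ya, za⁆ ∈ a := a.smul_mem _ (h.lie_mem_left _ hya _ hza)
  have hyzb : ⁅ya, zb⁆ + (2 : k)⁻¹ • ⁅yb, zb⁆ ∈ b :=
    b.add_mem (h.lie_mem_right _ _ hzb) (b.smul_mem _ (h.lie_mem_right _ _ hzb))
  rw [hP.apply_add_add hya hyb hza hzb, hP.apply_add_add hxa hxb hyza hyzb]
  simp [lie_add, lie_smul, h.lie_lie_left _ _ hya _ hza, h.lie_lie_right _ _ hyb _ hzb]

theorem apply_apply_left (hP : IsSplitHalfBracket a b P) (h : IsNovikovSplitting a b)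
    (hxa : xa ∈ a) (hxb : xb ∈ b) (hya : ya ∈ a) (hyb : yb ∈ b) (hza : za ∈ a) (hzb : zb ∈ b) :
    P (P (xa + xb) (ya + yb)) (za + zb) = (2 : k)⁻¹ • ⁅⁅xa, yb⁆, zb⁆ := by
  have hxya : (2 : k)⁻¹ • ⁅xa, ya⁆ ∈ a := a.smul_mem _ (h.lie_mem_left _ hxa _ hya)
  have hxyb : ⁅xa, yb⁆ + (2 : k)⁻¹ • ⁅xb, yb⁆ ∈ b :=
    b.add_mem (h.lie_mem_right _ _ hyb) (b.smul_mem _ (h.lie_mem_right _ _ hyb))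
  rw [hP.apply_add_add hxa hxb hya hyb, hP.apply_add_add hxya hxyb hza hzb]
  simp [add_lie, smul_lie, h.lie_lie_left' za hxa hya, h.lie_lie_left' zb hxa hya,
    h.lie_lie_right' zb hxb hyb]

theorem left_symmetric (hP : IsSplitHalfBracket a b P) (h : IsNovikovSplitting a b)
    (hab : Codisjoint a b) (x y z : g) :
    P x (P y z) - P (P x y) z = P y (P x z) - P (P y x) z := by
  obtain ⟨xa, xb, hxa, hxb, rfl⟩ := Submodule.codisjoint_iff_exists_add_eq.mp hab x
  obtain ⟨ya, yb, hya, hyb, rfl⟩ := Submodule.codisjoint_iff_exists_add_eq.mp hab y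
  obtain ⟨za, zb, hza, hzb, rfl⟩ := Submodule.codisjoint_iff_exists_add_eq.mp hab z
  rw [hP.apply_apply h hxa hxb hya hyb hza hzb, hP.apply_apply_left h hxa hxb hya hyb hza hzb,
    hP.apply_apply h hya hyb hxa hxb hza hzb, hP.apply_apply_left h hya hyb hxa hxb hza hzb,
    h.lie_lie_comm_of_mem_left zb hxa hya, h.lie_lie_right_comm_of_mem_right xa hyb hzb,
    h.lie_lie_right_comm_of_mem_right ya hxb hzb, ← lie_skew _ yb, ← lie_skew _ xb]
  module

theorem right_commutative (hP : IsSplitHalfBracket a b P) (h : IsNovikovSplitting a b)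
    (hab : Codisjoint a b) (x y z : g) : P (P x y) z = P (P x z) y := by
  obtain ⟨xa, xb, hxa, hxb, rfl⟩ := Submodule.codisjoint_iff_exists_add_eq.mp hab x
  obtain ⟨ya, yb, hya, hyb, rfl⟩ := Submodule.codisjoint_iff_exists_add_eq.mp hab y
  obtain ⟨za, zb, hza, hzb, rfl⟩ := Submodule.codisjoint_iff_exists_add_eq.mp hab z
  rw [hP.apply_apply_left h hxa hxb hya hyb hza hzb, hP.apply_apply_left h hxa hxb hza hzb hya hyb,
    h.lie_lie_right_comm_of_mem_right xa hyb hzb]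

theorem sub_swap_eq_lie [NeZero (2 : k)] (hP : IsSplitHalfBracket a b P) (hab : Codisjoint a b)
    (x y : g) : P x y - P y x = ⁅x, y⁆ := by
  obtain ⟨xa, xb, hxa, hxb, rfl⟩ := Submodule.codisjoint_iff_exists_add_eq.mp hab x
  obtain ⟨ya, yb, hya, hyb, rfl⟩ := Submodule.codisjoint_iff_exists_add_eq.mp hab y
  rw [hP.apply_add_add hxa hxb hya hyb, hP.apply_add_add hya hyb hxa hxb, ← lie_skew ya xa,
    ← lie_skew ya xb, ← lie_skew yb xb, add_lie, lie_add, lie_add]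
  match_scalars <;> field_simp <;> norm_num

end IsSplitHalfBracket

end

theorem directSum_novikov_structure_general
    {k g : Type*} [Field k] [CharZero k] [LieRing g] [LieAlgebra k g]
    (a b : Submodule k g) (hcompl : IsCompl a b)
    (haa : ∀ x ∈ a, ∀ y ∈ a, ⁅x, y⁆ ∈ a)
    (hgb : ∀ (x : g), ∀ y ∈ b, ⁅x, y⁆ ∈ b)
    (hgaa : ∀ (x : g), ∀ y ∈ a, ∀ z ∈ a, ⁅x, ⁅y, z⁆⁆ = 0)
    (hgbb : ∀ (x : g), ∀ y ∈ b, ∀ z ∈ b, ⁅x, ⁅y, z⁆⁆ = 0)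
    (P : g →ₗ[k] g →ₗ[k] g)
    (hPaa : ∀ x ∈ a, ∀ y ∈ a, P x y = (2 : k)⁻¹ • ⁅x, y⁆)
    (hPab : ∀ x ∈ a, ∀ y ∈ b, P x y = ⁅x, y⁆)
    (hPba : ∀ x ∈ b, ∀ y ∈ a, P x y = 0)
    (hPbb : ∀ x ∈ b, ∀ y ∈ b, P x y = (2 : k)⁻¹ • ⁅x, y⁆) :
    (∀ x y z : g, P x (P y z) - P (P x y) z = P y (P x z) - P (P y x) z)
    ∧ (∀ x y z : g, P (P x y) z = P (P x z) y)
    ∧ (∀ x y : g, P x y - P y x = ⁅x, y⁆) := by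
  have h : IsNovikovSplitting a b := ⟨haa, hgb, hgaa, hgbb⟩
  have hP : IsSplitHalfBracket a b P := ⟨hPaa, hPab, hPba, hPbb⟩
  exact ⟨hP.left_symmetric h hcompl.codisjoint, hP.right_commutative h hcompl.codisjoint,
    hP.sub_swap_eq_lie hcompl.codisjoint⟩

/-- Let `g = a ⊕ b` (direct vector space sum) with `[a,a] ⊆ a`, `[g,b] ⊆ b`,
`[g,[a,a]] = 0` and `[g,[b,b]] = 0`. Then the bilinear product determined by
`a₁·a₂ = (1/2)[a₁,a₂]`, `a₁·b₁ = [a₁,b₁]`, `b₁·a₁ = 0`, `b₁·b₂ = (1/2)[b₁,b₂]`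
is a Novikov structure on `g`. -/
theorem directSum_novikov_structure
    {k g : Type*} [Field k] [CharZero k] [LieRing g] [LieAlgebra k g]
    [FiniteDimensional k g]
    (a b : Submodule k g) (hcompl : IsCompl a b)
    (haa : ∀ x ∈ a, ∀ y ∈ a, ⁅x, y⁆ ∈ a)
    (hgb : ∀ (x : g), ∀ y ∈ b, ⁅x, y⁆ ∈ b)
    (hgaa : ∀ (x : g), ∀ y ∈ a, ∀ z ∈ a, ⁅x, ⁅y, z⁆⁆ = 0)
    (hgbb : ∀ (x : g), ∀ y ∈ b, ∀ z ∈ b, ⁅x, ⁅y, z⁆⁆ = 0)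
    (P : g →ₗ[k] g →ₗ[k] g)
    (hPaa : ∀ x ∈ a, ∀ y ∈ a, P x y = (2 : k)⁻¹ • ⁅x, y⁆)
    (hPab : ∀ x ∈ a, ∀ y ∈ b, P x y = ⁅x, y⁆)
    (hPba : ∀ x ∈ b, ∀ y ∈ a, P x y = 0)
    (hPbb : ∀ x ∈ b, ∀ y ∈ b, P x y = (2 : k)⁻¹ • ⁅x, y⁆) :
    (∀ x y z : g, P x (P y z) - P (P x y) z = P y (P x z) - P (P y x) z)
    ∧ (∀ x y z : g, P (P x y) z = P (P x z) y)
    ∧ (∀ x y : g, P x y - P y x = ⁅x, y⁆) :=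
  directSum_novikov_structure_general a b hcompl haa hgb hgaa hgbb P hPaa hPab hPba hPbb
end

section
/- Let g be a finite-dimensional Lie algebra admitting a codimension-one ideal b with [b,b] ⊆ Z(g). Then g admits a Novikov structure. -/
/-!
Choose a linear form `φ` with kernel `b` and `e` with `φ e = 1`, and let `σ x = x - φ x • e` be
the projection onto `b` along `e`. The product `x · y = ½ ⁅σ x, σ y⁆ + φ x • ⁅e, σ y⁆` satisfies
`x · y - y · x = ⁅x, y⁆` by splitting `x = σ x + φ x • e`. All products lie in `b` and `⁅b, b⁆` is
central, so `(x · y) · z = ½ φ x • ⁅⁅e, σ y⁆, σ z⁆`, and the Jacobi identity makes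
`⁅⁅e, σ y⁆, σ z⁆` symmetric in `y` and `z`: this is right-commutativity, and together with the
analogous formula for `x · (y · z)` it gives left-symmetry.
-/

open LinearMap Module

theorem Submodule.exists_dual_ker_eq_of_finrank_quotient_eq_one {K V : Type*} [Field K]
    [AddCommGroup V] [Module K V] {p : Submodule K V} (h : finrank K (V ⧸ p) = 1) :
    ∃ (φ : Dual K V) (e : V), ker φ = p ∧ φ e = 1 := by
  have : Module.Finite K (V ⧸ p) := Module.finite_of_finrank_eq_succ h
  let ψ : (V ⧸ p) ≃ₗ[K] K := LinearEquiv.ofFinrankEq _ _ (by simpa using h)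
  obtain ⟨e, he⟩ := (ψ.surjective.comp p.mkQ_surjective) 1
  exact ⟨ψ.toLinearMap ∘ₗ p.mkQ, e, by rw [LinearEquiv.ker_comp, Submodule.ker_mkQ], he⟩

namespace Module.Dual

variable {R M : Type*} [CommRing R] [AddCommGroup M] [Module R M]

def projKer (φ : Dual R M) (e : M) : M →ₗ[R] M :=
  LinearMap.id - φ.smulRight e

theorem projKer_apply (φ : Dual R M) (e x : M) : φ.projKer e x = x - φ x • e :=
  rfl

variable {p : Submodule R M} {φ : Dual R M} {e : M}

theorem projKer_mem (hker : ker φ = p) (he : φ e = 1) (x : M) : φ.projKer e x ∈ p := by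
  rw [← hker, mem_ker, projKer_apply, map_sub, map_smul, he, smul_eq_mul, mul_one, sub_self]

theorem projKer_eq_self (hker : ker φ = p) {u : M} (hu : u ∈ p) : φ.projKer e u = u := by
  rw [← hker, mem_ker] at hu
  rw [projKer_apply, hu, zero_smul, sub_zero]

end Module.Dual

theorem lie_lie_swap_of_lie_mem_center {R L : Type*} [CommRing R] [LieRing L] [LieAlgebra R L]
    {u v : L} (h : ⁅u, v⁆ ∈ LieAlgebra.center R L) (w : L) : ⁅⁅w, u⁆, v⁆ = ⁅⁅w, v⁆, u⁆ := by
  have h0 : ⁅w, ⁅u, v⁆⁆ = 0 := (LieModule.mem_maxTrivSubmodule R L L _).mp h w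
  rw [leibniz_lie, ← lie_skew u] at h0
  exact add_neg_eq_zero.mp h0

namespace LieAlgebra

variable {R L : Type*} [CommRing R] [LieRing L] [LieAlgebra R L] [Invertible (2 : R)]

def novikovProduct (φ : Dual R L) (e : L) : L →ₗ[R] L →ₗ[R] L :=
  (⅟2 : R) • (LieModule.toEnd R L L : L →ₗ[R] Module.End R L).compl₁₂
      (φ.projKer e) (φ.projKer e) +
    φ.smulRight ((LieModule.toEnd R L L e : Module.End R L) ∘ₗ φ.projKer e)

theorem novikovProduct_apply (φ : Dual R L) (e x y : L) :
    novikovProduct φ e x y =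
      (⅟2 : R) • ⁅φ.projKer e x, φ.projKer e y⁆ + φ x • ⁅e, φ.projKer e y⁆ :=
  rfl

theorem novikovProduct_sub_novikovProduct (φ : Dual R L) (e x y : L) :
    novikovProduct φ e x y - novikovProduct φ e y x = ⁅x, y⁆ := by
  conv_rhs => rw [← sub_add_cancel x (φ x • e), ← sub_add_cancel y (φ y • e)]
  simp only [novikovProduct_apply, Dual.projKer_apply, lie_add, add_lie, lie_smul, smul_lie,
    lie_self, smul_zero, add_zero]
  rw [← lie_skew (y - φ y • e), ← lie_skew (x - φ x • e) e]
  match_scalars <;> simp [← two_mul]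

variable {b : LieIdeal R L} {φ : Dual R L} {e : L}

theorem novikovProduct_mem (hker : ker φ = b.toSubmodule) (he : φ e = 1) (x y : L) :
    novikovProduct φ e x y ∈ b := by
  have hy : φ.projKer e y ∈ b := Dual.projKer_mem hker he y
  exact add_mem (b.smul_mem _ (b.lie_mem hy)) (b.smul_mem _ (b.lie_mem hy))

theorem lie_novikovProduct (hker : ker φ = b.toSubmodule) (he : φ e = 1)
    (hZ : ∀ x ∈ b, ∀ y ∈ b, ⁅x, y⁆ ∈ center R L) (w x y : L) :
    ⁅w, novikovProduct φ e x y⁆ = φ x • ⁅w, ⁅e, φ.projKer e y⁆⁆ := by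
  have hσ := Dual.projKer_mem hker he
  have hc : ⁅w, ⁅φ.projKer e x, φ.projKer e y⁆⁆ = 0 :=
    (LieModule.mem_maxTrivSubmodule R L L _).mp (hZ _ (hσ x) _ (hσ y)) w
  rw [novikovProduct_apply, lie_add, lie_smul, lie_smul, hc, smul_zero, zero_add]

theorem novikovProduct_novikovProduct_left (hker : ker φ = b.toSubmodule) (he : φ e = 1)
    (hZ : ∀ x ∈ b, ∀ y ∈ b, ⁅x, y⁆ ∈ center R L) (x y z : L) :
    novikovProduct φ e (novikovProduct φ e x y) z =
      (⅟2 : R) • φ x • ⁅⁅e, φ.projKer e y⁆, φ.projKer e z⁆ := by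
  have hP := novikovProduct_mem hker he x y
  have hφP : φ (novikovProduct φ e x y) = 0 := by
    rwa [← mem_ker, hker, LieSubmodule.mem_toSubmodule]
  rw [novikovProduct_apply, Dual.projKer_eq_self hker hP, hφP, zero_smul, add_zero, ← lie_skew,
    lie_novikovProduct hker he hZ, ← lie_skew]
  simp only [smul_neg, neg_neg]

theorem novikovProduct_novikovProduct_right (hker : ker φ = b.toSubmodule) (he : φ e = 1)
    (hZ : ∀ x ∈ b, ∀ y ∈ b, ⁅x, y⁆ ∈ center R L) (x y z : L) :
    novikovProduct φ e x (novikovProduct φ e y z) =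
      (⅟2 : R) • φ y • ⁅φ.projKer e x, ⁅e, φ.projKer e z⁆⁆ +
        φ x • φ y • ⁅e, ⁅e, φ.projKer e z⁆⁆ := by
  rw [novikovProduct_apply, Dual.projKer_eq_self hker (novikovProduct_mem hker he y z),
    lie_novikovProduct hker he hZ, lie_novikovProduct hker he hZ]

theorem novikovProduct_right_comm (hker : ker φ = b.toSubmodule) (he : φ e = 1)
    (hZ : ∀ x ∈ b, ∀ y ∈ b, ⁅x, y⁆ ∈ center R L) (x y z : L) :
    novikovProduct φ e (novikovProduct φ e x y) z =
      novikovProduct φ e (novikovProduct φ e x z) y := by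
  have hσ := Dual.projKer_mem hker he
  rw [novikovProduct_novikovProduct_left hker he hZ, novikovProduct_novikovProduct_left hker he hZ,
    lie_lie_swap_of_lie_mem_center (hZ _ (hσ y) _ (hσ z))]

theorem novikovProduct_assoc_symm (hker : ker φ = b.toSubmodule) (he : φ e = 1)
    (hZ : ∀ x ∈ b, ∀ y ∈ b, ⁅x, y⁆ ∈ center R L) (x y z : L) :
    novikovProduct φ e x (novikovProduct φ e y z) -
        novikovProduct φ e (novikovProduct φ e x y) z =
      novikovProduct φ e y (novikovProduct φ e x z) -
        novikovProduct φ e (novikovProduct φ e y x) z := by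
  have hσ := Dual.projKer_mem hker he
  simp only [novikovProduct_novikovProduct_left hker he hZ,
    novikovProduct_novikovProduct_right hker he hZ]
  rw [lie_lie_swap_of_lie_mem_center (hZ _ (hσ x) _ (hσ z)),
    lie_lie_swap_of_lie_mem_center (hZ _ (hσ y) _ (hσ z)), ← lie_skew _ (φ.projKer e x),
    ← lie_skew _ (φ.projKer e y)]
  module

end LieAlgebra

theorem codimOne_ideal_novikov_general
    {k g : Type*} [Field k] [CharZero k] [LieRing g] [LieAlgebra k g]
    (b : LieIdeal k g)
    (hcodim : Module.finrank k (g ⧸ b.toSubmodule) = 1)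
    (hZ : ∀ x ∈ b, ∀ y ∈ b, ⁅x, y⁆ ∈ LieAlgebra.center k g) :
    ∃ P : g →ₗ[k] g →ₗ[k] g,
      (∀ x y z : g, P x (P y z) - P (P x y) z = P y (P x z) - P (P y x) z)
      ∧ (∀ x y z : g, P (P x y) z = P (P x z) y)
      ∧ (∀ x y : g, P x y - P y x = ⁅x, y⁆) := by
  obtain ⟨φ, e, hker, he⟩ := Submodule.exists_dual_ker_eq_of_finrank_quotient_eq_one hcodim
  have : Invertible (2 : k) := invertibleOfNonzero two_ne_zero
  exact ⟨LieAlgebra.novikovProduct φ e, LieAlgebra.novikovProduct_assoc_symm hker he hZ,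
    LieAlgebra.novikovProduct_right_comm hker he hZ,
    LieAlgebra.novikovProduct_sub_novikovProduct φ e⟩

/-- A finite-dimensional Lie algebra admitting a codimension-one ideal `b`
with `[b,b] ⊆ Z(g)` admits a Novikov structure. -/
theorem codimOne_ideal_novikov
    {k g : Type*} [Field k] [CharZero k] [LieRing g] [LieAlgebra k g]
    [FiniteDimensional k g]
    (b : LieIdeal k g)
    (hcodim : Module.finrank k (g ⧸ b.toSubmodule) = 1)
    (hZ : ∀ x ∈ b, ∀ y ∈ b, ⁅x, y⁆ ∈ LieAlgebra.center k g) :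
    ∃ P : g →ₗ[k] g →ₗ[k] g,
      (∀ x y z : g, P x (P y z) - P (P x y) z = P y (P x z) - P (P y x) z)
      ∧ (∀ x y z : g, P (P x y) z = P (P x z) y)
      ∧ (∀ x y : g, P x y - P y x = ⁅x, y⁆) :=
  codimOne_ideal_novikov_general b hcodim hZ
end

section
/- Let g = a ⋊_φ b be a semidirect product of an abelian Lie algebra a and a Lie algebra b via φ : b → End(a). If b admits a Novikov product (x,y) ↦ x·y with φ(x·y) = 0 for all x,y ∈ b, then (a,x)∘(b,y) := (φ(x)b, x·y) is a Novikov product on g compatible with the Lie bracket. -/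
/-!
Since `φ` kills every product `x·y`, it kills every bracket `⁅x, y⁆ = x·y - y·x`; as `φ` is a
representation, the operators `φ x` then pairwise commute. The `b`-components of the Novikov
identities for `∘` are those of `·`, and in the `a`-components all terms of the form
`φ (x·y) _` vanish, so left symmetry reduces to `φ x (φ y c) = φ y (φ x c)` and right
commutativity to `0 = 0`.
-/

section Lift

variable {k a b : Type*} [CommRing k] [AddCommGroup a] [Module k a] [AddCommGroup b] [Module k b]

def novikovLift (φ : b →ₗ[k] Module.End k a) (m : b →ₗ[k] b →ₗ[k] b) (p q : a × b) : a × b :=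
  (φ p.2 q.1, m p.2 q.2)

theorem novikovLift_right_comm (φ : b →ₗ[k] Module.End k a) (m : b →ₗ[k] b →ₗ[k] b)
    (hrc : ∀ x y z : b, m (m x y) z = m (m x z) y) (hker : ∀ x y : b, φ (m x y) = 0)
    (p q r : a × b) :
    novikovLift φ m (novikovLift φ m p q) r = novikovLift φ m (novikovLift φ m p r) q := by
  simp [novikovLift, hker, hrc p.2 q.2 r.2]

end Lift

section Lie

variable {k a b M : Type*} [CommRing k] [AddCommGroup a] [Module k a]
  [LieRing b] [Module k b] [AddCommGroup M] [Module k M]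

theorem map_lie_eq_zero_of_map_mul_eq_zero (f : b →ₗ[k] M) (m : b →ₗ[k] b →ₗ[k] b)
    (hcompat : ∀ x y : b, m x y - m y x = ⁅x, y⁆) (hker : ∀ x y : b, f (m x y) = 0) (x y : b) :
    f ⁅x, y⁆ = 0 := by
  rw [← hcompat, map_sub, hker, hker, sub_zero]

theorem commute_of_map_lie_eq_zero (φ : b →ₗ[k] Module.End k a)
    (hφ : ∀ x y : b, φ ⁅x, y⁆ = φ x * φ y - φ y * φ x) (hzero : ∀ x y : b, φ ⁅x, y⁆ = 0)
    (x y : b) : Commute (φ x) (φ y) :=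
  sub_eq_zero.mp ((hφ x y).symm.trans (hzero x y))

theorem novikovLift_left_symm (φ : b →ₗ[k] Module.End k a) (m : b →ₗ[k] b →ₗ[k] b)
    (hφ : ∀ x y : b, φ ⁅x, y⁆ = φ x * φ y - φ y * φ x)
    (hls : ∀ x y z : b, m x (m y z) - m (m x y) z = m y (m x z) - m (m y x) z)
    (hcompat : ∀ x y : b, m x y - m y x = ⁅x, y⁆) (hker : ∀ x y : b, φ (m x y) = 0)
    (p q r : a × b) :
    novikovLift φ m p (novikovLift φ m q r) - novikovLift φ m (novikovLift φ m p q) r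
      = novikovLift φ m q (novikovLift φ m p r) - novikovLift φ m (novikovLift φ m q p) r := by
  have hcomm : φ p.2 * φ q.2 = φ q.2 * φ p.2 :=
    commute_of_map_lie_eq_zero φ hφ (map_lie_eq_zero_of_map_mul_eq_zero φ m hcompat hker) _ _
  refine Prod.ext ?_ (hls p.2 q.2 r.2)
  simpa [novikovLift, hker] using congrArg (· r.1) hcomm

theorem novikovLift_sub_novikovLift (φ : b →ₗ[k] Module.End k a) (m : b →ₗ[k] b →ₗ[k] b)
    (hcompat : ∀ x y : b, m x y - m y x = ⁅x, y⁆) (p q : a × b) :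
    novikovLift φ m p q - novikovLift φ m q p = (φ p.2 q.1 - φ q.2 p.1, ⁅p.2, q.2⁆) :=
  Prod.ext rfl (hcompat p.2 q.2)

end Lie

theorem semidirect_novikov_lift_general
    {k a b : Type*} [Field k]
    [AddCommGroup a] [Module k a] [LieRing b] [LieAlgebra k b]
    (φ : b →ₗ[k] Module.End k a)
    (hφ : ∀ x y : b, φ ⁅x, y⁆ = φ x * φ y - φ y * φ x)
    (m : b →ₗ[k] b →ₗ[k] b)
    (hls : ∀ x y z : b, m x (m y z) - m (m x y) z = m y (m x z) - m (m y x) z)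
    (hrc : ∀ x y z : b, m (m x y) z = m (m x z) y)
    (hcompat : ∀ x y : b, m x y - m y x = ⁅x, y⁆)
    (hker : ∀ x y : b, φ (m x y) = 0) :
    (∀ p q r : a × b,
      ((φ p.2 (φ q.2 r.1), m p.2 (m q.2 r.2)) : a × b)
        - (φ (m p.2 q.2) r.1, m (m p.2 q.2) r.2)
      = ((φ q.2 (φ p.2 r.1), m q.2 (m p.2 r.2)) : a × b)
        - (φ (m q.2 p.2) r.1, m (m q.2 p.2) r.2))
    ∧ (∀ p q r : a × b,
      ((φ (m p.2 q.2) r.1, m (m p.2 q.2) r.2) : a × b)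
        = (φ (m p.2 r.2) q.1, m (m p.2 r.2) q.2))
    ∧ (∀ p q : a × b,
      ((φ p.2 q.1, m p.2 q.2) : a × b) - (φ q.2 p.1, m q.2 p.2)
        = (φ p.2 q.1 - φ q.2 p.1, ⁅p.2, q.2⁆)) :=
  ⟨novikovLift_left_symm φ m hφ hls hcompat hker,
    novikovLift_right_comm φ m hrc hker,
    novikovLift_sub_novikovLift φ m hcompat⟩

/-- Let `g = a ⋊_φ b`. If `b` admits a Novikov product `x·y` with
`φ(x·y) = 0`, then `(a,x) ∘ (b,y) := (φ(x)b, x·y)` is a Novikov product on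
`g = a × b` compatible with the semidirect product bracket. -/
theorem semidirect_novikov_lift
    {k a b : Type*} [Field k] [CharZero k]
    [AddCommGroup a] [Module k a] [LieRing b] [LieAlgebra k b]
    (φ : b →ₗ[k] Module.End k a)
    (hφ : ∀ x y : b, φ ⁅x, y⁆ = φ x * φ y - φ y * φ x)
    (m : b →ₗ[k] b →ₗ[k] b)
    (hls : ∀ x y z : b, m x (m y z) - m (m x y) z = m y (m x z) - m (m y x) z)
    (hrc : ∀ x y z : b, m (m x y) z = m (m x z) y)
    (hcompat : ∀ x y : b, m x y - m y x = ⁅x, y⁆)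
    (hker : ∀ x y : b, φ (m x y) = 0) :
    (∀ p q r : a × b,
      ((φ p.2 (φ q.2 r.1), m p.2 (m q.2 r.2)) : a × b)
        - (φ (m p.2 q.2) r.1, m (m p.2 q.2) r.2)
      = ((φ q.2 (φ p.2 r.1), m q.2 (m p.2 r.2)) : a × b)
        - (φ (m q.2 p.2) r.1, m (m q.2 p.2) r.2))
    ∧ (∀ p q r : a × b,
      ((φ (m p.2 q.2) r.1, m (m p.2 q.2) r.2) : a × b)
        = (φ (m p.2 r.2) q.1, m (m p.2 r.2) q.2))
    ∧ (∀ p q : a × b,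
      ((φ p.2 q.1, m p.2 q.2) : a × b) - (φ q.2 p.1, m q.2 p.2)
        = (φ p.2 q.1 - φ q.2 p.1, ⁅p.2, q.2⁆)) :=
  semidirect_novikov_lift_general φ hφ m hls hrc hcompat hker
end

section
/- Let g = (a, b, φ, Ω) be a two-step solvable Lie algebra given as an extension of an abelian Lie algebra b by an abelian Lie algebra a, with bracket [(a,x),(b,y)] = (φ(x)b − φ(y)a + Ω(x,y), 0), where φ : b → End(a) satisfies φ(x)φ(y) = φ(y)φ(x) and Ω is a 2-cocycle: φ(x)Ω(y,z) − φ(y)Ω(x,z) + φ(z)Ω(x,y) = 0. If there exists e ∈ b such that φ(e) is invertible, then the product (a,x)∘(b,y) := (φ(x)b + ω(x,y), 0) with ω(x,y) := φ(e)^{-1}φ(x)Ω(e,y) defines a Novikov structure on g. -/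
/-!
The product kills everything of the form `u ∘ v`, because its `b`-component vanishes; so the
Novikov identity is `0 = 0` and left-symmetry reduces to `u ∘ (v ∘ w) = v ∘ (u ∘ w)`, which holds
because `φ(e)⁻¹` commutes with every `φ(x)`. Evaluating the cocycle identity at `(x, y, e)` gives
`φ(e) Ω(x,y) = φ(x) Ω(e,y) - φ(y) Ω(e,x)`, i.e. `ω(x,y) - ω(y,x) = Ω(x,y)`, which is the
statement that the commutator of the product is the Lie bracket.
-/

section

variable {k a b : Type*} [CommRing k] [AddCommGroup a] [Module k a] [AddCommGroup b] [Module k b]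

theorem apply_cocycle_eq_sub {φ : b →ₗ[k] Module.End k a} {Ω : b →ₗ[k] b →ₗ[k] a}
    (hskew : ∀ x y : b, Ω x y = -Ω y x)
    (hcocycle : ∀ x y z : b, φ x (Ω y z) - φ y (Ω x z) + φ z (Ω x y) = 0) (e x y : b) :
    φ e (Ω x y) = φ x (Ω e y) - φ y (Ω e x) := by
  have h := hcocycle x y e
  rw [hskew y e, hskew x e, map_neg, map_neg] at h
  rw [← sub_eq_zero, ← h]
  abel

theorem leftInverse_apply_sub_swap_eq {φ : b →ₗ[k] Module.End k a} {Ω : b →ₗ[k] b →ₗ[k] a}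
    (hskew : ∀ x y : b, Ω x y = -Ω y x)
    (hcocycle : ∀ x y z : b, φ x (Ω y z) - φ y (Ω x z) + φ z (Ω x y) = 0)
    {e : b} {ψ : Module.End k a} (hψ : ψ * φ e = 1) (x y : b) :
    ψ (φ x (Ω e y)) - ψ (φ y (Ω e x)) = Ω x y := by
  rw [← map_sub, ← apply_cocycle_eq_sub hskew hcocycle, ← Module.End.mul_apply, hψ,
    Module.End.one_apply]

end

theorem Commute.mul_mul_eq_mul_mul_of_commute {M : Type*} [Monoid M] {f g h : M}
    (hfg : Commute f g) (hfh : Commute f h) (hgh : Commute g h) : g * f * h = h * f * g := by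
  rw [← hfg.eq, mul_assoc, hgh.eq, ← mul_assoc, hfh.eq, mul_assoc]

theorem twoStepSolvable_invertible_novikov_general
    {k a b : Type*} [Field k]
    [AddCommGroup a] [Module k a] [AddCommGroup b] [Module k b]
    (φ : b →ₗ[k] Module.End k a)
    (hcomm : ∀ x y : b, φ x * φ y = φ y * φ x)
    (Ω : b →ₗ[k] b →ₗ[k] a)
    (hskew : ∀ x y : b, Ω x y = -Ω y x)
    (hcocycle : ∀ x y z : b,
      φ x (Ω y z) - φ y (Ω x z) + φ z (Ω x y) = 0)
    (e : b) (ψ : Module.End k a)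
    (hψ₁ : ψ * φ e = 1) (hψ₂ : φ e * ψ = 1)
    (P : (a × b) → (a × b) → (a × b))
    (hP : P = fun u v => (φ u.2 v.1 + ψ (φ u.2 (Ω e v.2)), (0 : b))) :
    (∀ u v w : a × b, P u (P v w) - P (P u v) w = P v (P u w) - P (P v u) w)
    ∧ (∀ u v w : a × b, P (P u v) w = P (P u w) v)
    ∧ (∀ u v : a × b,
        P u v - P v u = (φ u.2 v.1 - φ v.2 u.1 + Ω u.2 v.2, (0 : b))) := by
  subst hP
  have hψ : ∀ x, Commute ψ (φ x) :=
    fun x => Commute.units_inv_left (u := ⟨φ e, ψ, hψ₂, hψ₁⟩) (hcomm e x)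
  have hφψφ : ∀ (x y : b) (c : a), φ x (ψ (φ y c)) = φ y (ψ (φ x c)) := fun x y c =>
    LinearMap.congr_fun ((hψ x).mul_mul_eq_mul_mul_of_commute (hψ y) (hcomm x y)) c
  have hφφ : ∀ (x y : b) (c : a), φ x (φ y c) = φ y (φ x c) := fun x y c =>
    LinearMap.congr_fun (hcomm x y) c
  refine ⟨fun u v w => ?_, fun u v w => by simp, fun u v => ?_⟩
  · ext
    · simp [hφφ u.2 v.2, hφψφ u.2 v.2]
    · simp
  · ext
    · simp only [Prod.fst_sub]
      rw [← leftInverse_apply_sub_swap_eq hskew hcocycle hψ₁ u.2 v.2]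
      abel
    · simp

/-- Let `g = (a, b, φ, Ω)` be a two-step solvable Lie algebra on `a × b`
(`a`, `b` abelian) with bracket
`[(a,x),(b,y)] = (φ(x)b - φ(y)a + Ω(x,y), 0)`, where the operators `φ(x)`
commute and `Ω` is a skew-symmetric 2-cocycle. If `φ(e)` is invertible
(with inverse `ψ`) for some `e ∈ b`, then the product
`(a,x) ∘ (b,y) := (φ(x)b + ω(x,y), 0)` with `ω(x,y) := φ(e)⁻¹ φ(x) Ω(e,y)`
defines a Novikov structure on `g`. -/
theorem twoStepSolvable_invertible_novikov
    {k a b : Type*} [Field k] [CharZero k]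
    [AddCommGroup a] [Module k a] [AddCommGroup b] [Module k b]
    (φ : b →ₗ[k] Module.End k a)
    (hcomm : ∀ x y : b, φ x * φ y = φ y * φ x)
    (Ω : b →ₗ[k] b →ₗ[k] a)
    (hskew : ∀ x y : b, Ω x y = -Ω y x)
    (hcocycle : ∀ x y z : b,
      φ x (Ω y z) - φ y (Ω x z) + φ z (Ω x y) = 0)
    (e : b) (ψ : Module.End k a)
    (hψ₁ : ψ * φ e = 1) (hψ₂ : φ e * ψ = 1)
    (P : (a × b) → (a × b) → (a × b))
    (hP : P = fun u v => (φ u.2 v.1 + ψ (φ u.2 (Ω e v.2)), (0 : b))) :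
    (∀ u v w : a × b, P u (P v w) - P (P u v) w = P v (P u w) - P (P v u) w)
    ∧ (∀ u v w : a × b, P (P u v) w = P (P u w) v)
    ∧ (∀ u v : a × b,
        P u v - P v u = (φ u.2 v.1 - φ v.2 u.1 + Ω u.2 v.2, (0 : b))) :=
  twoStepSolvable_invertible_novikov_general φ hcomm Ω hskew hcocycle e ψ hψ₁ hψ₂ P hP
end
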